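/- Let G be a group and let ḡ, ḡ', ḡ'' be tuples of elements of G with πḡ' = 1. Let H_1 = ⟨ḡ entries together with ḡ'' entries⟩, H_2 = ⟨ḡ'⟩, and H = ⟨H_1, H_2⟩. Assume every element h ∈ H factors as h = h_1 h_2 with h_1 ∈ H_1 and h_2 ∈ H_2. Then for every h ∈ H, the concatenations ḡ·ḡ'·ḡ'' and ḡ·(ḡ')^h·ḡ'' are braid-equivalent. -/

import Mathlib

/-- One Hurwitz braid move: replace adjacent entries `a, b` by `a*b*a⁻¹, a`. -/
inductive BraidMove (G : Type*) [Group G] : List G → List G → Prop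
  | mk (l₁ l₂ : List G) (a b : G) :
      BraidMove G (l₁ ++ a :: b :: l₂) (l₁ ++ (a * b * a⁻¹) :: a :: l₂)

/-- Braid equivalence of tuples: the equivalence relation generated by Hurwitz moves. -/
def BraidEquiv (G : Type*) [Group G] : List G → List G → Prop :=
  Relation.EqvGen (BraidMove G)

/-- Componentwise conjugation of a tuple: `ḡ^h = (h g₁ h⁻¹, …, h gₙ h⁻¹)`. -/
def conjList {G : Type*} [Group G] (h : G) (l : List G) : List G :=
  l.map fun x => h * x * h⁻¹

/-!
A block `m` with `π m = 1` behaves like a central element under braid moves: sweeping an entry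
`a` through it conjugates `a` by `π m = 1`, so `m` can be moved to any position of a tuple.
Placing it right after an entry `b` and sweeping `b` through it and back conjugates `m` by `b`;
hence `m` can be conjugated by every entry of the surrounding tuple, i.e. by all of `H₁`.
Rotating `m` cyclically brings any of its own entries `b` in front of the rest, whose product
`b⁻¹` commutes with `b`, so the same sweep conjugates `m` by `b`, i.e. by all of `H₂`.
Since `H = H₁ H₂`, this covers all of `H`.
-/

local infix:50 " ∼ᵇ " => BraidEquiv _

section

variable {G : Type*} [Group G]

@[simp] lemma conjList_nil (c : G) : conjList c [] = [] := rfl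

@[simp] lemma conjList_cons (c a : G) (l : List G) :
    conjList c (a :: l) = (c * a * c⁻¹) :: conjList c l := rfl

@[simp] lemma conjList_append (c : G) (l l' : List G) :
    conjList c (l ++ l') = conjList c l ++ conjList c l' := List.map_append

@[simp] lemma conjList_conjList (c d : G) (l : List G) :
    conjList c (conjList d l) = conjList (c * d) l := by
  induction l with
  | nil => rfl
  | cons a t ih => simp [ih, mul_assoc]

@[simp] lemma conjList_one (l : List G) : conjList 1 l = l := by
  induction l with
  | nil => rfl
  | cons a t ih => simp [ih]

@[simp] lemma prod_conjList (c : G) (l : List G) :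
    (conjList c l).prod = c * l.prod * c⁻¹ := by
  induction l with
  | nil => simp
  | cons a t ih => simp [ih, mul_assoc]

namespace BraidEquiv

variable {l l' l'' : List G}

@[refl] lemma refl (l : List G) : l ∼ᵇ l := Relation.EqvGen.refl l

lemma symm (h : l ∼ᵇ l') : l' ∼ᵇ l := Relation.EqvGen.symm _ _ h

lemma trans (h : l ∼ᵇ l') (h' : l' ∼ᵇ l'') : l ∼ᵇ l'' :=
  Relation.EqvGen.trans _ _ _ h h'

instance : Trans (BraidEquiv G) (BraidEquiv G) (BraidEquiv G) := ⟨BraidEquiv.trans⟩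

lemma of_move (h : BraidMove G l l') : l ∼ᵇ l' := Relation.EqvGen.rel _ _ h

lemma append_append (p s : List G) (h : l ∼ᵇ l') : p ++ l ++ s ∼ᵇ p ++ l' ++ s := by
  induction h with
  | rel x y hxy =>
    obtain ⟨l₁, l₂, a, b⟩ := hxy
    simpa using of_move (BraidMove.mk (p ++ l₁) (l₂ ++ s) a b)
  | refl x => rfl
  | symm x y _ ih => exact ih.symm
  | trans x y z _ _ ih₁ ih₂ => exact ih₁.trans ih₂

lemma append_left (p : List G) (h : l ∼ᵇ l') : p ++ l ∼ᵇ p ++ l' := by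
  simpa using h.append_append p []

lemma append_right (s : List G) (h : l ∼ᵇ l') : l ++ s ∼ᵇ l' ++ s := by
  simpa using h.append_append [] s

lemma cons (a : G) (h : l ∼ᵇ l') : a :: l ∼ᵇ a :: l' :=
  h.append_left [a]

lemma conjList (c : G) (h : l ∼ᵇ l') : conjList c l ∼ᵇ conjList c l' := by
  induction h with
  | rel x y hxy =>
    obtain ⟨l₁, l₂, a, b⟩ := hxy
    have e : c * (a * b * a⁻¹) * c⁻¹ = (c * a * c⁻¹) * (c * b * c⁻¹) * (c * a * c⁻¹)⁻¹ := by
      group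
    simp only [conjList_append, conjList_cons, e]
    exact of_move (BraidMove.mk _ _ _ _)
  | refl x => rfl
  | symm x y _ ih => exact ih.symm
  | trans x y z _ _ ih₁ ih₂ => exact ih₁.trans ih₂

end BraidEquiv

lemma braidEquiv_cons_conjList_append (a : G) (l : List G) :
    a :: l ∼ᵇ conjList a l ++ [a] := by
  induction l with
  | nil => rfl
  | cons b t ih =>
    calc a :: b :: t ∼ᵇ (a * b * a⁻¹) :: a :: t := .of_move (BraidMove.mk [] t a b)
      _ ∼ᵇ (a * b * a⁻¹) :: conjList a t ++ [a] := by simpa using ih.cons (a * b * a⁻¹)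

lemma braidEquiv_append_singleton (a : G) (l : List G) :
    l ++ [a] ∼ᵇ (l.prod * a * l.prod⁻¹) :: l := by
  induction l with
  | nil => simpa using BraidEquiv.refl [a]
  | cons b t ih =>
    have e : b * (t.prod * a * t.prod⁻¹) * b⁻¹ = (b * t.prod) * a * (b * t.prod)⁻¹ := by group
    calc b :: t ++ [a] ∼ᵇ b :: (t.prod * a * t.prod⁻¹) :: t := ih.cons b
      _ ∼ᵇ ((b :: t).prod * a * (b :: t).prod⁻¹) :: b :: t := by
          simpa [e] using BraidEquiv.of_move (BraidMove.mk [] t b (t.prod * a * t.prod⁻¹))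

lemma braidEquiv_append_singleton_of_commute {a : G} {l : List G} (ha : Commute a l.prod) :
    l ++ [a] ∼ᵇ a :: l := by
  have e : l.prod * a * l.prod⁻¹ = a := by rw [← ha.eq, mul_inv_cancel_right]
  have h := braidEquiv_append_singleton a l
  rwa [e] at h

lemma braidEquiv_append_comm_of_prod_eq_one {m : List G} (hm : m.prod = 1) (l : List G) :
    m ++ l ∼ᵇ l ++ m := by
  induction l with
  | nil => simpa using BraidEquiv.refl m
  | cons a l ih =>
    calc m ++ a :: l = m ++ [a] ++ l := by simp
      _ ∼ᵇ a :: m ++ l :=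
          (braidEquiv_append_singleton_of_commute (hm ▸ Commute.one_right a)).append_right l
      _ ∼ᵇ a :: (l ++ m) := ih.cons a

lemma braidEquiv_move_of_prod_eq_one {m : List G} (hm : m.prod = 1) {u v w z : List G}
    (h : u ++ v = w ++ z) : u ++ m ++ v ∼ᵇ w ++ m ++ z :=
  calc u ++ m ++ v ∼ᵇ u ++ v ++ m := by
        simpa using (braidEquiv_append_comm_of_prod_eq_one hm v).append_left u
    _ = w ++ z ++ m := by rw [h]
    _ ∼ᵇ w ++ m ++ z := by
        simpa using ((braidEquiv_append_comm_of_prod_eq_one hm z).append_left w).symm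

lemma braidEquiv_cons_conjList_of_commute {a : G} {m : List G} (ha : Commute a m.prod) :
    a :: m ∼ᵇ a :: conjList a m := by
  have ha' : Commute a (conjList a m).prod := by
    rw [prod_conjList]
    exact ((Commute.refl a).mul_right ha).mul_right (Commute.refl a).inv_right
  calc a :: m ∼ᵇ conjList a m ++ [a] := braidEquiv_cons_conjList_append a m
    _ ∼ᵇ a :: conjList a m := braidEquiv_append_singleton_of_commute ha'

lemma braidEquiv_append_comm_of_prod_append_eq_one {p t : List G} (h : (p ++ t).prod = 1) :
    p ++ t ∼ᵇ t ++ p := by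
  induction p generalizing t with
  | nil => simpa using BraidEquiv.refl t
  | cons a p ih =>
    have hpt : (p ++ t).prod = a⁻¹ := eq_inv_of_mul_eq_one_right (by simpa using h)
    calc a :: p ++ t ∼ᵇ p ++ t ++ [a] :=
          (braidEquiv_append_singleton_of_commute (hpt ▸ (Commute.refl a).inv_right)).symm
      _ ∼ᵇ t ++ [a] ++ p := by
          simpa using ih (t := t ++ [a]) (by rw [← List.append_assoc, List.prod_append, hpt]; simp)
      _ = t ++ a :: p := by simp

lemma braidEquiv_conjList_of_mem_closure {l : List G} (hl : l.prod = 1) {x : G}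
    (hx : x ∈ Subgroup.closure {y | y ∈ l}) : l ∼ᵇ conjList x l := by
  induction hx using Subgroup.closure_induction with
  | mem b hb =>
    obtain ⟨p, q, rfl⟩ := List.append_of_mem hb
    have hrot : p ++ b :: q ∼ᵇ b :: (q ++ p) := braidEquiv_append_comm_of_prod_append_eq_one hl
    have hl' : p.prod * (b * q.prod) = 1 := by simpa using hl
    have hqp : (q ++ p).prod = b⁻¹ :=
      eq_inv_of_mul_eq_one_right (by simpa [mul_assoc] using mul_eq_one_comm.mp hl')
    calc p ++ b :: q ∼ᵇ b :: (q ++ p) := hrot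
      _ ∼ᵇ b :: conjList b (q ++ p) :=
          braidEquiv_cons_conjList_of_commute (hqp ▸ (Commute.refl b).inv_right)
      _ ∼ᵇ conjList b (p ++ b :: q) := by simpa using (hrot.conjList b).symm
  | one => simpa using BraidEquiv.refl l
  | mul x y _ _ ihx ihy => simpa using ihx.trans (ihy.conjList x)
  | inv x _ ih => simpa using (ih.conjList x⁻¹).symm

lemma braidEquiv_conjList_middle_of_mem {u v m : List G} (hm : m.prod = 1) {b : G}
    (hb : b ∈ u ++ v) : u ++ m ++ v ∼ᵇ u ++ conjList b m ++ v := by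
  obtain ⟨p, q, hpq⟩ := List.append_of_mem hb
  have hbm : Commute b m.prod := hm ▸ Commute.one_right b
  calc u ++ m ++ v ∼ᵇ p ++ [b] ++ m ++ q := braidEquiv_move_of_prod_eq_one hm (by simp [hpq])
    _ ∼ᵇ p ++ [b] ++ conjList b m ++ q := by
        simpa using (braidEquiv_cons_conjList_of_commute hbm).append_append p q
    _ ∼ᵇ u ++ conjList b m ++ v := braidEquiv_move_of_prod_eq_one (by simp [hm]) (by simp [hpq])

lemma braidEquiv_conjList_middle_of_mem_closure {u v m : List G} (hm : m.prod = 1) {x : G}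
    (hx : x ∈ Subgroup.closure {y | y ∈ u ++ v}) : u ++ m ++ v ∼ᵇ u ++ conjList x m ++ v := by
  induction hx using Subgroup.closure_induction generalizing m with
  | mem b hb => exact braidEquiv_conjList_middle_of_mem hm hb
  | one => simpa using BraidEquiv.refl (u ++ m ++ v)
  | mul x y _ _ ihx ihy => simpa using (ihy hm).trans (ihx (m := conjList y m) (by simp [hm]))
  | inv x _ ih => simpa using (ih (m := conjList x⁻¹ m) (by simp [hm])).symm

end

theorem braidEquiv_conj_middle_block_general {G : Type*} [Group G] (g g' g'' : List G)
    (hprod : g'.prod = 1)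
    (H₁ : Subgroup G) (hH₁ : H₁ = Subgroup.closure ({x | x ∈ g} ∪ {x | x ∈ g''}))
    (H₂ : Subgroup G) (hH₂ : H₂ = Subgroup.closure {x | x ∈ g'})
    (H : Subgroup G)
    (hfact : ∀ h ∈ H, ∃ h₁ ∈ H₁, ∃ h₂ ∈ H₂, h = h₁ * h₂) :
    ∀ h ∈ H, BraidEquiv G (g ++ g' ++ g'') (g ++ conjList h g' ++ g'') := by
  intro h hh
  obtain ⟨h₁, hh₁, h₂, hh₂, rfl⟩ := hfact h hh
  rw [show {x | x ∈ g} ∪ {x | x ∈ g''} = {x | x ∈ g ++ g''} from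
    Set.ext fun _ => List.mem_append.symm] at hH₁
  subst hH₁ hH₂
  calc g ++ g' ++ g'' ∼ᵇ g ++ conjList h₂ g' ++ g'' :=
        (braidEquiv_conjList_of_mem_closure hprod hh₂).append_append g g''
    _ ∼ᵇ g ++ conjList h₁ (conjList h₂ g') ++ g'' :=
        braidEquiv_conjList_middle_of_mem_closure (by simp [hprod]) hh₁
    _ = g ++ conjList (h₁ * h₂) g' ++ g'' := by rw [conjList_conjList]

/-- conjugating a middle block of product 1 by elements of
, provided , preserves the braid-equivalence class. -/
theorem braidEquiv_conj_middle_block {G : Type*} [Group G] (g g' g'' : List G)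
    (hprod : g'.prod = 1)
    (H₁ : Subgroup G) (hH₁ : H₁ = Subgroup.closure ({x | x ∈ g} ∪ {x | x ∈ g''}))
    (H₂ : Subgroup G) (hH₂ : H₂ = Subgroup.closure {x | x ∈ g'})
    (H : Subgroup G) (hH : H = H₁ ⊔ H₂)
    (hfact : ∀ h ∈ H, ∃ h₁ ∈ H₁, ∃ h₂ ∈ H₂, h = h₁ * h₂) :
    ∀ h ∈ H, BraidEquiv G (g ++ g' ++ g'') (g ++ conjList h g' ++ g'') :=
  braidEquiv_conj_middle_block_general g g' g'' hprod H₁ hH₁ H₂ hH₂ H hfact
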